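/- Let p be a prime, j ≥ 2, and define e_j(X) = (1/(p^j)!) · Π_{a ∈ {0,...,⌊p^j/2⌋}, gcd(a,p)=1} (X² - a²) ∈ ℚ[X]. Then e_j(x) ∈ ℤ_p for every x ∈ ℤ_p^*. -/

import Mathlib

/-!
Let `n = p^j` and `m = ⌊n/2⌋`. The factors `X² - a² = (X - a)(X + a)` turn the product into
`∏ (X - c)` over the integers `c ∈ [-m, m]` prime to `p`, and for `j ≥ 2` these are exactly the
integers prime to `p` in `[-m, n - m)`, a run of `n` consecutive integers. For a unit `x` the
missing factors `x - c` with `p ∣ c` are units, so the product has the norm of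
`∏_{c ∈ [-m, n - m)} (x - c)`, a value of the descending Pochhammer polynomial, which `n!` divides.
-/

open Polynomial Finset
open scoped Nat

lemma prod_Ico_sub_eq_descPochhammer_eval {R : Type*} [CommRing R] (z : R) (lo : ℤ) (n : ℕ) :
    ∏ c ∈ Ico lo (lo + n), (z - c) = (descPochhammer R n).eval (z - lo) := by
  induction n with
  | zero => simp
  | succ n ih =>
    rw [Nat.cast_succ, ← add_assoc, ← insert_Ico_right_eq_Ico_add_one (by omega),
      prod_insert right_notMem_Ico, ih, descPochhammer_succ_eval]
    push_cast
    ring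

lemma prod_Icc_sub_eq_prod_sq_sub_sq {R : Type*} [CommRing R] {p : ℕ} (hp : p.Prime)
    (x : R) (m : ℕ) :
    ∏ c ∈ Icc (-m : ℤ) m with ¬ (p : ℤ) ∣ c, (x - c) =
      ∏ a ∈ range (m + 1) with a.gcd p = 1, (x ^ 2 - (a : R) ^ 2) := by
  set S := (range (m + 1)).filter (fun a => a.gcd p = 1)
  have hS0 : ∀ a ∈ S, a ≠ 0 := by
    rintro a ha rfl
    exact hp.ne_one (by simpa [S] using ha)
  have hsplit : (Icc (-m : ℤ) m).filter (fun c => ¬ (p : ℤ) ∣ c) =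
      S.image (fun a : ℕ => (a : ℤ)) ∪ S.image (fun a : ℕ => -(a : ℤ)) := by
    ext c
    simp only [S, mem_filter, mem_Icc, mem_union, mem_image, mem_range, Int.natCast_dvd,
      ← Nat.coprime_iff_gcd_eq_one, Nat.coprime_comm, hp.coprime_iff_not_dvd]
    constructor
    · rintro ⟨⟨hlo, hhi⟩, hc⟩
      rcases Int.natAbs_eq c with h | h
      · exact Or.inl ⟨c.natAbs, ⟨by omega, hc⟩, h.symm⟩
      · exact Or.inr ⟨c.natAbs, ⟨by omega, hc⟩, h.symm⟩
    · rintro (⟨a, ⟨ha, hc⟩, rfl⟩ | ⟨a, ⟨ha, hc⟩, rfl⟩) <;>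
        simp only [Int.natAbs_neg, Int.natAbs_natCast] <;> exact ⟨⟨by omega, by omega⟩, hc⟩
  have hdisj : Disjoint (S.image (fun a : ℕ => (a : ℤ))) (S.image fun a : ℕ => -(a : ℤ)) := by
    simp only [disjoint_left, mem_image]
    rintro _ ⟨a, ha, rfl⟩ ⟨b, -, hab⟩
    have := hS0 a ha
    omega
  rw [hsplit, prod_union hdisj, prod_image (fun a _ b _ h => by exact_mod_cast h),
    prod_image (fun a _ b _ h => by omega), ← prod_mul_distrib]
  refine prod_congr rfl fun a _ => ?_
  push_cast
  ring

lemma filter_not_dvd_Icc_eq_Ico {p : ℕ} (hp : p.Prime) {j : ℕ} (hj : 2 ≤ j) :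
    (Icc (-(p ^ j / 2 : ℕ) : ℤ) (p ^ j / 2 : ℕ)).filter (fun c => ¬ (p : ℤ) ∣ c) =
      (Ico (-(p ^ j / 2 : ℕ) : ℤ) (-(p ^ j / 2 : ℕ) + (p ^ j : ℕ))).filter
        (fun c => ¬ (p : ℤ) ∣ c) := by
  ext c
  simp only [mem_filter, mem_Icc, mem_Ico]
  refine and_congr_left fun hc => and_congr_right fun _ => ?_
  -- for odd `p` the intervals coincide; for `p = 2` they differ only at the even `2 ^ (j - 1)`
  rcases hp.eq_two_or_odd' with rfl | hodd
  · have h4 : 2 ^ 2 ∣ 2 ^ j := pow_dvd_pow 2 hj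
    push_cast at hc
    omega
  · have := Nat.odd_iff.mp (hodd.pow (n := j))
    omega

namespace PadicInt

variable {p : ℕ} [Fact p.Prime]

@[simp, norm_cast]
lemma coe_prod {ι : Type*} (s : Finset ι) (f : ι → ℤ_[p]) :
    (((∏ i ∈ s, f i) : ℤ_[p]) : ℚ_[p]) = ∏ i ∈ s, (f i : ℚ_[p]) :=
  map_prod Coe.ringHom f s

lemma norm_prod_Ico_sub_le_norm_factorial (x : ℤ_[p]) (lo : ℤ) (n : ℕ) :
    ‖∏ c ∈ Ico lo (lo + n), (x - c)‖ ≤ ‖(n ! : ℤ_[p])‖ := by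
  rw [prod_Ico_sub_eq_descPochhammer_eval, descPochhammer_eval_eq_ascPochhammer]
  exact norm_ascPochhammer_le n _

lemma norm_sub_intCast_eq_one {x : ℤ_[p]} (hx : IsUnit x) {c : ℤ} (hc : (p : ℤ) ∣ c) :
    ‖x - c‖ = 1 := by
  rw [isUnit_iff] at hx
  have hlt : ‖(c : ℤ_[p])‖ < ‖x‖ := hx ▸ (norm_int_lt_one_iff_dvd c).2 hc
  rw [sub_eq_add_neg, IsUltrametricDist.norm_add_eq_max_of_norm_ne_norm (by simpa using hlt.ne'),
    norm_neg, max_eq_left hlt.le, hx]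

lemma norm_prod_filter_not_dvd_sub {x : ℤ_[p]} (hx : IsUnit x) (s : Finset ℤ) :
    ‖∏ c ∈ s with ¬ (p : ℤ) ∣ c, (x - c)‖ = ‖∏ c ∈ s, (x - c)‖ := by
  have hdvd : ‖∏ c ∈ s with (p : ℤ) ∣ c, (x - c)‖ = 1 := by
    rw [norm_prod]
    exact prod_eq_one fun c hc => norm_sub_intCast_eq_one hx (mem_filter.1 hc).2
  rw [← prod_filter_mul_prod_filter_not s (fun c => (p : ℤ) ∣ c), norm_mul, hdvd, one_mul]

end PadicInt

/-- For `j ≥ 2`, the polynomial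
`e_j(X) = (1/(p^j)!)·∏_{0 ≤ a ≤ ⌊p^j/2⌋, gcd(a,p)=1} (X² - a²)`
maps `p`-adic units to `p`-adic integers. -/
theorem e_j_maps_units_to_integers (p : ℕ) [Fact p.Prime] (j : ℕ) (hj : 2 ≤ j)
    (x : ℤ_[p]) (hx : IsUnit x) :
    ‖Polynomial.aeval ((x : ℚ_[p]))
        (Polynomial.C (((Nat.factorial (p ^ j) : ℚ))⁻¹) *
          ∏ a ∈ (Finset.range (p ^ j / 2 + 1)).filter (fun a => Nat.gcd a p = 1),
            (Polynomial.X ^ 2 - Polynomial.C ((a : ℚ)) ^ 2))‖ ≤ 1 := by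
  set S := (range (p ^ j / 2 + 1)).filter (fun a => a.gcd p = 1)
  have hS : ‖∏ a ∈ S, (x ^ 2 - (a : ℤ_[p]) ^ 2)‖ ≤ ‖((p ^ j)! : ℤ_[p])‖ := by
    rw [← prod_Icc_sub_eq_prod_sq_sub_sq Fact.out, filter_not_dvd_Icc_eq_Ico Fact.out hj,
      PadicInt.norm_prod_filter_not_dvd_sub hx]
    exact PadicInt.norm_prod_Ico_sub_le_norm_factorial x _ _
  have hval : aeval (x : ℚ_[p]) (C ((p ^ j)! : ℚ)⁻¹ * ∏ a ∈ S, (X ^ 2 - C (a : ℚ) ^ 2)) =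
      (((p ^ j)! : ℤ_[p]) : ℚ_[p])⁻¹ * ((∏ a ∈ S, (x ^ 2 - (a : ℤ_[p]) ^ 2) : ℤ_[p]) : ℚ_[p]) := by
    simp
  have hfac : 0 < ‖((p ^ j)! : ℤ_[p])‖ :=
    norm_pos_iff.2 (Nat.cast_ne_zero.2 (Nat.factorial_ne_zero _))
  rw [hval, norm_mul, norm_inv, PadicInt.padic_norm_e_of_padicInt,
    PadicInt.padic_norm_e_of_padicInt, inv_mul_le_one₀ hfac]
  exact hS
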